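/- For t ≥ 5 and n ≥ t: if e ⊆ [n] with |e| ≥ 2 and e ∉ E(H_t(n)), then H_t(n) + e contains a Berge-S_t subhypergraph. -/

import Mathlib

open Finset

/-- A hypergraph `H` on `[n]` contains a Berge-`S_t` subhypergraph (`S_t` is the star on `t`
vertices): there are `t - 1` distinct hyperedges `E k` of `H` and distinct vertices
`c, v 1, …, v (t-1)` with `{c, v k} ⊆ E k` for every `k`. -/
def HasBergeStar (t n : ℕ) (H : Finset (Finset (Fin n))) : Prop :=
  ∃ (E : Fin (t - 1) → Finset (Fin n)) (c : Fin n) (v : Fin (t - 1) → Fin n),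
    Function.Injective E ∧ Function.Injective v ∧ (∀ k, v k ≠ c) ∧
      ∀ k, E k ∈ H ∧ c ∈ E k ∧ v k ∈ E k

/-- `H` (with all hyperedges of size at least 2) is Berge-`S_t` saturated: it contains no
Berge-`S_t` subhypergraph, but adding any new hyperedge of size at least 2 creates one. -/
def StarSat (t n : ℕ) (H : Finset (Finset (Fin n))) : Prop :=
  (∀ e ∈ H, 2 ≤ e.card) ∧ ¬ HasBergeStar t n H ∧
    ∀ e : Finset (Fin n), e ∉ H → 2 ≤ e.card → HasBergeStar t n (insert e H)

/-- The hypergraph `H_t(n)` on `[n]` with hyperedges `[n]`, `[n] \ {i}` for `i ∈ [t-3]`,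
and `[t-3]`. -/
def Ht (t n : ℕ) : Finset (Finset (Fin n)) :=
  insert (Finset.univ.filter (fun i : Fin n => (i : ℕ) < t - 3))
    (insert Finset.univ
      ((Finset.univ.filter (fun i : Fin n => (i : ℕ) < t - 3)).image
        (fun i => Finset.univ.erase i)))

/-!
Choose a centre `c ∈ e`. If `c` is one of the low vertices `[t-3]`, use the edges `e`, `[t-3]`,
`[n]` and `[n] \ {i}` for the other low `i`; otherwise use `e`, `[n]` and all `[n] \ {i}`.
Either way these are `t - 1` edges through `c`. The leaves are chosen greedily: first for the
at most two small edges (`e` and `[t-3]` differ, which is what makes two distinct leaves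
available), then for the co-singletons `[n] \ {i}`, which have `n - 1 ≥ t - 1` vertices,
and finally for `[n]`.
-/

section IsBergeStar

variable {α : Type*} [DecidableEq α]

/-- A Berge star indexed by its set `S` of hyperedges rather than by `Fin (t - 1)`. -/
def IsBergeStar (c : α) (S : Finset (Finset α)) : Prop :=
  ∃ f : Finset α → α, Set.InjOn f S ∧ ∀ E ∈ S, c ∈ E ∧ f E ∈ E.erase c

theorem isBergeStar_empty (c : α) : IsBergeStar c ∅ :=
  ⟨fun _ => c, by simp, by simp⟩

theorem IsBergeStar.insert {c : α} {S : Finset (Finset α)} {E : Finset α}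
    (hS : IsBergeStar c S) (hcE : c ∈ E) (hE : #S + 1 < #E) :
    IsBergeStar c (insert E S) := by
  by_cases hES : E ∈ S
  · rwa [insert_eq_of_mem hES]
  obtain ⟨f, hinj, hf⟩ := hS
  have hlt : #(S.image f) < #(E.erase c) := by
    rw [card_erase_of_mem hcE]
    have := card_image_le (s := S) (f := f)
    omega
  obtain ⟨v, hvE, hvS⟩ := exists_mem_notMem_of_card_lt_card hlt
  have hfS : Set.EqOn f (Function.update f E v) S := fun F hF =>
    (Function.update_of_ne (ne_of_mem_of_not_mem hF hES) v f).symm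
  refine ⟨Function.update f E v, ?_, ?_⟩
  · rw [coe_insert, Set.injOn_insert (by simpa using hES)]
    refine ⟨hinj.congr hfS, ?_⟩
    rintro ⟨F, hF, hFv⟩
    rw [Function.update_self, ← hfS hF] at hFv
    exact hvS (hFv ▸ mem_image_of_mem f hF)
  · intro F hF
    rcases mem_insert.mp hF with rfl | hF
    · exact ⟨hcE, by rwa [Function.update_self]⟩
    · rw [← hfS hF]
      exact hf F hF

theorem IsBergeStar.union {c : α} {S T : Finset (Finset α)} (hS : IsBergeStar c S)
    (hT : ∀ E ∈ T, c ∈ E ∧ #S + #T < #E) : IsBergeStar c (S ∪ T) := by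
  induction T using Finset.induction_on with
  | empty => simpa using hS
  | insert E T hET ih =>
    rw [card_insert_of_notMem hET] at hT
    rw [union_insert]
    have hE := hT E (mem_insert_self E T)
    refine (ih fun F hF => ?_).insert hE.1 ?_
    · have := hT F (mem_insert_of_mem hF)
      exact ⟨this.1, by omega⟩
    · have := card_union_le S T
      omega

theorem exists_ne_mem_erase_of_ne {c : α} {E F : Finset α} (hEF : E ≠ F) (hcE : c ∈ E)
    (hcF : c ∈ F) (hE : 2 ≤ #E) (hF : 2 ≤ #F) : ∃ x ∈ E.erase c, ∃ y ∈ F.erase c, x ≠ y := by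
  obtain ⟨x, hx⟩ : (E.erase c).Nonempty := by
    rw [← card_pos, card_erase_of_mem hcE]
    omega
  by_cases hy : ∃ y ∈ F.erase c, x ≠ y
  · exact ⟨x, hx, hy⟩
  push Not at hy
  -- Otherwise `F = {c, x} ⊊ E`, and an element of `E \ F` serves as the leaf of `E`.
  obtain ⟨y, hyF⟩ : (F.erase c).Nonempty := by
    rw [← card_pos, card_erase_of_mem hcF]
    omega
  have hxF : x ∈ F.erase c := hy y hyF ▸ hyF
  have hFE : F ⊂ E := by
    refine ssubset_of_subset_of_ne (fun z hz => ?_) hEF.symm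
    by_cases hzc : z = c
    · exact hzc ▸ hcE
    · exact hy z (mem_erase.mpr ⟨hzc, hz⟩) ▸ mem_of_mem_erase hx
  obtain ⟨z, hzE, hzF⟩ := exists_of_ssubset hFE
  exact ⟨z, mem_erase.mpr ⟨fun h => hzF (h ▸ hcF), hzE⟩, x, hxF,
    fun h => hzF (h ▸ mem_of_mem_erase hxF)⟩

theorem isBergeStar_singleton {c : α} {E : Finset α} (hcE : c ∈ E) (hE : 2 ≤ #E) :
    IsBergeStar c {E} := by
  simpa using (isBergeStar_empty c).insert hcE (by simp; omega)

theorem isBergeStar_pair {c : α} {E F : Finset α} (hEF : E ≠ F) (hcE : c ∈ E) (hcF : c ∈ F)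
    (hE : 2 ≤ #E) (hF : 2 ≤ #F) : IsBergeStar c {E, F} := by
  obtain ⟨x, hx, y, hy, hxy⟩ := exists_ne_mem_erase_of_ne hEF hcE hcF hE hF
  refine ⟨fun G => if G = E then x else y, ?_, ?_⟩
  · rw [coe_pair, Set.injOn_pair]
    simp [hEF.symm, hxy]
  · intro G hG
    rcases mem_insert.mp hG with rfl | hG
    · simpa [hcE] using hx
    · rw [mem_singleton.mp hG]
      simpa [hEF.symm, hcF] using hy

end IsBergeStar

theorem hasBergeStar_of_isBergeStar {t n : ℕ} {H S : Finset (Finset (Fin n))} {c : Fin n}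
    (hSH : S ⊆ H) (hS : t - 1 ≤ #S) (hstar : IsBergeStar c S) : HasBergeStar t n H := by
  obtain ⟨f, hinj, hf⟩ := hstar
  let E : Fin (t - 1) → Finset (Fin n) := fun k => S.equivFin.symm (Fin.castLE hS k)
  have hE : ∀ k, E k ∈ S := fun k => Subtype.prop _
  have hEinj : Function.Injective E :=
    Subtype.val_injective.comp (S.equivFin.symm.injective.comp (Fin.castLE_injective hS))
  refine ⟨E, c, f ∘ E, hEinj, fun k₁ k₂ h => hEinj (hinj (hE k₁) (hE k₂) h), fun k => ?_,
    fun k => ⟨hSH (hE k), (hf _ (hE k)).1, mem_of_mem_erase (hf _ (hE k)).2⟩⟩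
  exact ne_of_mem_erase (hf _ (hE k)).2

/-- The low vertices `[t-3]` of `H_t(n)`. -/
def lowVertices (t n : ℕ) : Finset (Fin n) :=
  univ.filter (fun i : Fin n => (i : ℕ) < t - 3)

theorem Ht_eq (t n : ℕ) :
    Ht t n = insert (lowVertices t n) (insert univ ((lowVertices t n).image univ.erase)) :=
  rfl

theorem card_lowVertices {t n : ℕ} (h : t - 3 ≤ n) : #(lowVertices t n) = t - 3 := by
  rw [lowVertices, Fin.card_filter_val_lt, min_eq_right h]

/-- The star consists of `S`, the edges `[n] \ {i}` for low `i ≠ c`, and `[n]`. -/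
theorem Ht_hasBergeStar_insert {t n : ℕ} (hn : t ≤ n) {e : Finset (Fin n)} (he : e ∉ Ht t n)
    {c : Fin n} {S : Finset (Finset (Fin n))} (hSe : S ⊆ {e, lowVertices t n})
    (hS : IsBergeStar c S) (hcard : #S + #((lowVertices t n).erase c) + 2 = t) :
    HasBergeStar t n (insert e (Ht t n)) := by
  set A := lowVertices t n
  set T := (A.erase c).image univ.erase
  have hA : #A = t - 3 := card_lowVertices (by omega)
  have hT : #T = #(A.erase c) := card_image_of_injOn ((erase_injOn univ).mono (by simp))
  have hTH : T ⊆ Ht t n := fun E hE => by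
    rw [Ht_eq]
    exact mem_insert_of_mem (mem_insert_of_mem (image_subset_image (erase_subset c A) hE))
  have hTc : ∀ E ∈ T, c ∈ E ∧ #E = n - 1 := by
    simp only [T, mem_image, mem_erase]
    rintro _ ⟨i, ⟨hic, -⟩, rfl⟩
    exact ⟨mem_erase.mpr ⟨Ne.symm hic, mem_univ c⟩, by simp⟩
  have hS_eq : ∀ E ∈ S, E = e ∨ E = A := by simpa [subset_iff] using hSe
  have hST : Disjoint S T := by
    refine disjoint_left.mpr fun E hES hET => ?_
    rcases hS_eq E hES with rfl | rfl
    · exact he (hTH hET)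
    · have := (hTc _ hET).2
      omega
  have huniv : univ ∉ S ∪ T := by
    rintro h
    rcases mem_union.mp h with h | h
    · rcases hS_eq _ h with h | h
      · exact he (h ▸ by rw [Ht_eq]; simp)
      · have := congrArg card h
        rw [card_fin] at this
        omega
    · have := (hTc _ h).2
      rw [card_fin] at this
      omega
  have hstar : IsBergeStar c (insert univ (S ∪ T)) := by
    refine (hS.union fun E hE => ⟨(hTc E hE).1, ?_⟩).insert (mem_univ c) ?_
    · rw [(hTc E hE).2]
      omega
    · have := card_union_le S T
      rw [card_fin]
      omega
  refine hasBergeStar_of_isBergeStar (S := insert univ (S ∪ T)) ?_ ?_ hstar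
  · rw [Ht_eq] at hTH ⊢
    refine insert_subset (by simp) (union_subset (hSe.trans ?_) (hTH.trans (subset_insert e _)))
    exact insert_subset_insert e (singleton_subset_iff.mpr (mem_insert_self _ _))
  · rw [card_insert_of_notMem huniv, card_union_of_disjoint hST]
    omega

/-- For `t ≥ 5` and `n ≥ t`: adding to `H_t(n)` any new hyperedge `e ⊆ [n]` with `|e| ≥ 2`
creates a Berge-`S_t` subhypergraph. -/
theorem Ht_add_edge (t n : ℕ) (ht : 5 ≤ t) (hn : t ≤ n) (e : Finset (Fin n))
    (he : 2 ≤ e.card) (hne : e ∉ Ht t n) :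
    HasBergeStar t n (insert e (Ht t n)) := by
  have hA : #(lowVertices t n) = t - 3 := card_lowVertices (by omega)
  by_cases hlow : ∃ c ∈ e, c ∈ lowVertices t n
  · obtain ⟨c, hce, hcA⟩ := hlow
    have heA : e ≠ lowVertices t n := fun h => hne (h ▸ mem_insert_self _ _)
    refine Ht_hasBergeStar_insert hn hne subset_rfl
      (isBergeStar_pair heA hce hcA he (by omega)) ?_
    rw [card_pair heA, card_erase_of_mem hcA]
    omega
  · push Not at hlow
    obtain ⟨c, hce⟩ : e.Nonempty := card_pos.mp (by omega)
    refine Ht_hasBergeStar_insert hn hne (by simp) (isBergeStar_singleton hce he) ?_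
    rw [card_singleton, erase_eq_of_notMem (hlow c hce)]
    omega
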